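/- arXiv:1112.0910 — 6 statements merged into one kernel-verified Lean document; each statement's English description precedes it below -/
import Mathlib

section
/- Let μ be any probability measure on E_n = {0,1}^n that is invariant under cyclic rotation, i.e. μ(x_0,...,x_{n-1}) = μ(x_1,...,x_{n-1},x_0) for all x ∈ E_n. Then there exist two square complex matrices Q^0 and Q^1 of finite size such that μ(x) = Trace(Q^{x_0}·Q^{x_1}···Q^{x_{n-1}}) for all x ∈ E_n. -/
/-! Index matrices by the words `y ∈ {0,1}^(n+1)` and let `Q b` send `y` to its rotation with
weight a complex `(n+1)`-st root of `μ y` when `y 0 = b`, and kill it otherwise. Along a product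
`Q (x 0) ⋯ Q (x n)` a word can only return to itself if it is `x`, after passing through all
rotations of `x`; so the trace is `∏ i, μ (rotateⁱ x) ^ (1/(n+1)) = μ x` by rotation invariance. -/

open Matrix

section GraphMatrix

variable {ι R : Type*} [Fintype ι] [DecidableEq ι] [CommSemiring R]

def Matrix.ofFunGraph (σ : ι → ι) (c : ι → R) : Matrix ι ι R :=
  of fun y z => if z = σ y then c y else 0

theorem Matrix.ofFunGraph_mul_apply (σ : ι → ι) (c : ι → R) (N : Matrix ι ι R) (y z : ι) :
    (ofFunGraph σ c * N) y z = c y * N (σ y) z := by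
  rw [mul_apply, Finset.sum_eq_single (σ y)] <;> simp +contextual [ofFunGraph]

theorem Matrix.prod_ofFn_ofFunGraph_apply (σ : ι → ι) {k : ℕ} (c : Fin k → ι → R) (y z : ι) :
    (List.ofFn fun i => ofFunGraph σ (c i)).prod y z =
      if z = σ^[k] y then ∏ i, c i (σ^[i] y) else 0 := by
  induction k generalizing y with
  | zero => simp [one_apply, eq_comm]
  | succ k ih =>
    rw [List.ofFn_succ, List.prod_cons, ofFunGraph_mul_apply, ih, Fin.prod_univ_succ, mul_ite,
      mul_zero]
    rfl

end GraphMatrix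

theorem Matrix.trace_prod_ofFn_reindexAlgEquiv {ι κ R : Type*} [Fintype ι] [DecidableEq ι]
    [Fintype κ] [DecidableEq κ] [CommSemiring R] (e : ι ≃ κ) {k : ℕ} (A : Fin k → Matrix ι ι R) :
    trace (List.ofFn fun i => reindexAlgEquiv R R e (A i)).prod = trace (List.ofFn A).prod := by
  rw [← Function.comp_def, ← List.map_ofFn, ← map_list_prod, coe_reindexAlgEquiv, reindex_apply,
    trace, trace]
  exact Fintype.sum_equiv e.symm _ _ fun _ => rfl

namespace Fin

open Fin.NatCast

variable {α : Type*} {n : ℕ}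

def rotate (y : Fin (n + 1) → α) : Fin (n + 1) → α := fun i => y (i + 1)

theorem rotate_iterate_apply (k : ℕ) (y : Fin (n + 1) → α) (i : Fin (n + 1)) :
    (rotate^[k] y) i = y (i + k) := by
  induction k generalizing y with
  | zero => simp
  | succ k ih => rw [Function.iterate_succ_apply, ih, rotate, Nat.cast_succ, add_assoc]

theorem rotate_iterate_apply_zero (y : Fin (n + 1) → α) (j : Fin (n + 1)) :
    (rotate^[j] y) 0 = y j := by
  rw [rotate_iterate_apply, zero_add, cast_val_eq_self]

theorem rotate_iterate_self (y : Fin (n + 1) → α) : rotate^[n + 1] y = y := by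
  funext i
  rw [rotate_iterate_apply, natCast_self, add_zero]

end Fin

section CyclicWordMatrix

open Fin

variable {α R : Type*} [Fintype α] [DecidableEq α] [CommSemiring R] {n : ℕ}

def cyclicWordMatrix (w : (Fin (n + 1) → α) → R) (a : α) :
    Matrix (Fin (n + 1) → α) (Fin (n + 1) → α) R :=
  ofFunGraph rotate fun y => if y 0 = a then w y else 0

theorem trace_prod_cyclicWordMatrix (w : (Fin (n + 1) → α) → R) (x : Fin (n + 1) → α) :
    trace (List.ofFn fun i => cyclicWordMatrix w (x i)).prod =
      ∏ i : Fin (n + 1), w (rotate^[i] x) := by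
  simp only [trace, diag, cyclicWordMatrix, prod_ofFn_ofFunGraph_apply, rotate_iterate_self,
    if_true, rotate_iterate_apply_zero]
  refine (Finset.sum_eq_single x (fun y _ hy => ?_) (by simp)).trans (by simp)
  obtain ⟨j, hj⟩ := Function.ne_iff.mp hy
  exact Finset.prod_eq_zero (Finset.mem_univ j) (if_neg hj)

end CyclicWordMatrix

theorem exists_trace_representation_of_rotation_invariant_general (n : ℕ)
    (μ : (Fin (n + 1) → Bool) → ℝ)
    (hrot : ∀ x : Fin (n + 1) → Bool, μ x = μ (fun i => x (i + 1))) :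
    ∃ (m : ℕ) (Q : Bool → Matrix (Fin m) (Fin m) ℂ),
      ∀ x : Fin (n + 1) → Bool,
        (μ x : ℂ) = Matrix.trace ((List.ofFn fun i => Q (x i)).prod) := by
  have hμ : μ ∘ Fin.rotate = μ := funext fun y => (hrot y).symm
  let e := Fintype.equivFin (Fin (n + 1) → Bool)
  refine ⟨_, fun b => reindexAlgEquiv ℂ ℂ e
    (cyclicWordMatrix (fun y => (μ y : ℂ) ^ ((n + 1 : ℕ) : ℂ)⁻¹) b), fun x => ?_⟩
  rw [trace_prod_ofFn_reindexAlgEquiv, trace_prod_cyclicWordMatrix]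
  simp only [← Function.comp_apply (f := μ), Function.iterate_invariant hμ, Fin.prod_const]
  exact (Complex.cpow_nat_inv_pow _ n.succ_ne_zero).symm

/-- Every rotation-invariant probability measure on `{0,1}^n` admits a trace
representation by two finite square complex matrices. -/
theorem exists_trace_representation_of_rotation_invariant (n : ℕ)
    (μ : (Fin (n + 1) → Bool) → ℝ)
    (hpos : ∀ x, 0 ≤ μ x)
    (hsum : ∑ x : Fin (n + 1) → Bool, μ x = 1)
    (hrot : ∀ x : Fin (n + 1) → Bool, μ x = μ (fun i => x (i + 1))) :
    ∃ (m : ℕ) (Q : Bool → Matrix (Fin m) (Fin m) ℂ),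
      ∀ x : Fin (n + 1) → Bool,
        (μ x : ℂ) = Matrix.trace ((List.ofFn fun i => Q (x i)).prod) :=
  exists_trace_representation_of_rotation_invariant_general n μ hrot
end

section
/- Let α = (α_0,...,α_{n-1}) ∈ {0,1}^n, let R be its rotation class (the set of cyclic shifts of α), and let z_i be the integer whose binary expansion is the i-th rotation α(i). Define 2^n × 2^n matrices Q^0, Q^1 all of whose entries are zero except Q^{α_i}_{1+z_i, 1+z_{i+1}} = (#R)^{-1/n} for each i (indices mod n). Then Trace(∏_{i=0}^{n-1} Q^{x_i}) equals the uniform probability measure on R evaluated at x, i.e., it equals 1/#R if x ∈ R and 0 otherwise. -/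
/-! The matrices `Q c` form the labelled adjacency matrix of the graph with edges
`z i → z (i + 1)` labelled `α i`. Since `z i` is the binary code of the rotation `α(i)`, which
determines both `α i` and the rotation `α(i + 1)`, this graph is deterministic: from `z i` at most
one path reads a given word, so the diagonal entry of `∏ Q (x k)` at `z i` is `r ^ (n + 1)` if
`x = α(i)` and `0` otherwise. The nonzero diagonal entries therefore correspond to the codes of the
rotations equal to `x`: one if `x ∈ R`, none otherwise; and `r ^ (n + 1) = (#R)⁻¹`. -/

open Matrix Finset

theorem sum_two_pow_ite_injective (m : ℕ) :
    Function.Injective fun β : Fin m → Bool => ∑ j : Fin m, if β j then 2 ^ (j : ℕ) else 0 := by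
  have key (β : Fin m → Bool) : (∑ j : Fin m, if β j then 2 ^ (j : ℕ) else 0) =
      ((finFunctionFinEquiv fun j => ⟨(β j).toNat, Bool.toNat_lt _⟩ : Fin (2 ^ m)) : ℕ) := by
    rw [finFunctionFinEquiv_apply]
    refine sum_congr rfl fun j _ => ?_
    cases β j <;> simp
  intro β γ h
  have := finFunctionFinEquiv.injective (Fin.ext ((key β).symm.trans (h.trans (key γ))))
  funext j
  have hj : (β j).toNat = (γ j).toNat := by simpa using congrFun this j
  revert hj
  cases β j <;> cases γ j <;> simp

section LabelledEdgeMatrix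

variable {ι S A K : Type*} [Semiring K]

open Classical in
noncomputable def labelledEdgeMatrix (next : ι → ι) (label : ι → A) (z : ι → S) (r : K)
    (c : A) : Matrix S S K :=
  of fun a b => if ∃ i, c = label i ∧ a = z i ∧ b = z (next i) then r else 0

variable {next : ι → ι} {label : ι → A} {z : ι → S} (r : K)

theorem labelledEdgeMatrix_apply_of_notMem_range {a : S} (ha : a ∉ Set.range z) (c : A) (b : S) :
    labelledEdgeMatrix next label z r c a b = 0 := by
  simp only [labelledEdgeMatrix, of_apply]
  rw [if_neg]
  rintro ⟨i, -, rfl, -⟩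
  exact ha ⟨i, rfl⟩

variable (hcongr : ∀ i j, z i = z j → label i = label j ∧ z (next i) = z (next j))
include hcongr

theorem apply_iterate_eq_of_apply_eq {i j : ι} (hij : z i = z j) (k : ℕ) :
    z (next^[k] i) = z (next^[k] j) := by
  induction k generalizing i j with
  | zero => exact hij
  | succ k ih => simpa only [Function.iterate_succ_apply] using ih (hcongr i j hij).2

variable [DecidableEq S] [DecidableEq A]

theorem labelledEdgeMatrix_apply_of_congr (c : A) (i : ι) (b : S) :
    labelledEdgeMatrix next label z r c (z i) b =
      if c = label i ∧ b = z (next i) then r else 0 := by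
  simp only [labelledEdgeMatrix, of_apply]
  congr 1
  refine propext ⟨?_, fun ⟨hc, hb⟩ => ⟨i, hc, rfl, hb⟩⟩
  rintro ⟨j, hc, hij, hb⟩
  obtain ⟨hl, hn⟩ := hcongr i j hij
  exact ⟨hc.trans hl.symm, hb.trans hn.symm⟩

variable [Fintype S]

theorem prod_ofFn_labelledEdgeMatrix_apply {m : ℕ} (w : Fin m → A) (i : ι) (b : S) :
    (List.ofFn fun k => labelledEdgeMatrix next label z r (w k)).prod (z i) b =
      if (∀ k : Fin m, w k = label (next^[k] i)) ∧ b = z (next^[m] i) then r ^ m else 0 := by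
  induction m generalizing i with
  | zero => simp [one_apply, eq_comm]
  | succ m ih =>
    rw [List.ofFn_succ, List.prod_cons, mul_apply]
    simp only [labelledEdgeMatrix_apply_of_congr r hcongr, ite_mul, zero_mul, ite_and,
      sum_ite_irrel, sum_const_zero, sum_ite_eq', mem_univ, if_true,
      ih (fun k => w k.succ), Fin.forall_fin_succ, Fin.val_zero, Fin.val_succ,
      Function.iterate_zero_apply, Function.iterate_succ_apply]
    by_cases h0 : w 0 = label i <;> simp [h0, pow_succ']

theorem trace_prod_ofFn_labelledEdgeMatrix [Fintype ι] {m : ℕ} (w : Fin (m + 1) → A) :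
    trace (List.ofFn fun k => labelledEdgeMatrix next label z r (w k)).prod =
      #(({i | (∀ k, w k = label (next^[k] i)) ∧ z (next^[m + 1] i) = z i} : Finset ι).image z) *
        r ^ (m + 1) := by
  set T := ({i | (∀ k, w k = label (next^[k] i)) ∧ z (next^[m + 1] i) = z i} : Finset ι).image z
  have hdiag (a : S) :
      (List.ofFn fun k => labelledEdgeMatrix next label z r (w k)).prod a a =
        if a ∈ T then r ^ (m + 1) else 0 := by
    by_cases ha : a ∈ Set.range z
    · obtain ⟨i, rfl⟩ := ha
      rw [prod_ofFn_labelledEdgeMatrix_apply r hcongr]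
      congr 1
      simp only [T, mem_image, mem_filter, mem_univ, true_and]
      refine propext ⟨fun ⟨hw, hret⟩ => ⟨i, ⟨hw, hret.symm⟩, rfl⟩, ?_⟩
      rintro ⟨j, ⟨hw, hret⟩, hji⟩
      have hiter := apply_iterate_eq_of_apply_eq hcongr hji
      refine ⟨fun k => (hw k).trans (hcongr _ _ (hiter k)).1, ?_⟩
      rw [← hji, ← hret, hiter]
    · have haT : a ∉ T := fun haT => ha (by obtain ⟨j, -, rfl⟩ := mem_image.1 haT; exact ⟨j, rfl⟩)
      rw [if_neg haT, List.ofFn_succ, List.prod_cons, mul_apply]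
      exact sum_eq_zero fun c _ => by
        rw [labelledEdgeMatrix_apply_of_notMem_range r ha, zero_mul]
  simp only [trace, diag_apply]
  rw [sum_congr rfl fun a _ => hdiag a, sum_ite_mem, univ_inter, sum_const, nsmul_eq_mul]

end LabelledEdgeMatrix

theorem card_image_filter_eq_apply {ι β S : Type*} [Fintype ι] [DecidableEq β] [DecidableEq S]
    {f : ι → β} {z : ι → S} (hfz : ∀ i j, f i = f j → z i = z j) (x : β) :
    #(({i | x = f i} : Finset ι).image z) = if x ∈ univ.image f then 1 else 0 := by
  split_ifs with hx
  · obtain ⟨i₀, -, rfl⟩ := mem_image.1 hx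
    refine card_eq_one.2 ⟨z i₀, ?_⟩
    ext a
    simp only [mem_image, mem_filter, mem_univ, true_and, mem_singleton]
    refine ⟨?_, fun ha => ⟨i₀, rfl, ha.symm⟩⟩
    rintro ⟨i, hi, rfl⟩
    exact hfz i i₀ hi.symm
  · refine card_eq_zero.2 (image_eq_empty.2 (filter_eq_empty_iff.2 fun i _ hi => hx ?_))
    exact mem_image.2 ⟨i, mem_univ i, hi.symm⟩

theorem Real.rpow_neg_one_div_natCast_pow {x : ℝ} (hx : 0 ≤ x) {m : ℕ} (hm : m ≠ 0) :
    (x ^ (-1 / (m : ℝ))) ^ m = x⁻¹ := by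
  rw [← Real.rpow_natCast, ← Real.rpow_mul hx, div_mul_cancel₀ _ (Nat.cast_ne_zero.2 hm),
    Real.rpow_neg_one]

section Fin

variable {n : ℕ}

open Fin.NatCast Fin.CommRing in
theorem Fin.iterate_add_one_apply (k : ℕ) (i : Fin (n + 1)) :
    (· + 1)^[k] i = i + k := by
  rw [add_right_iterate, nsmul_one]

theorem Fin.iterate_add_one_self (i : Fin (n + 1)) : (· + 1)^[n + 1] i = i := by
  rw [Fin.iterate_add_one_apply, Fin.natCast_self, add_zero]

theorem Fin.forall_eq_apply_iterate_add_one_iff {β : Type*} (x α : Fin (n + 1) → β)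
    (i : Fin (n + 1)) :
    (∀ k : Fin (n + 1), x k = α ((· + 1)^[k] i)) ↔ x = fun j => α (j + i) := by
  simp only [Fin.iterate_add_one_apply, Fin.cast_val_eq_self, funext_iff, add_comm]

end Fin

/-- The uniform measure on the rotation class of a word `α ∈ {0,1}^n` has a
trace representation by the explicit `2^n × 2^n` matrices `Q^0, Q^1` whose only
nonzero entries are `Q^{α_i}[z_i, z_{i+1}] = (#R)^{-1/n}`. -/
theorem trace_representation_uniform_rotation_class (n : ℕ)
    (α : Fin (n + 1) → Bool)
    (R : Finset (Fin (n + 1) → Bool))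
    (hR : R = Finset.image (fun i : Fin (n + 1) => fun j => α (j + i)) Finset.univ)
    (z : Fin (n + 1) → Fin (2 ^ (n + 1)))
    (hz : ∀ i, (z i : ℕ) = ∑ j : Fin (n + 1), if α (j + i) then 2 ^ (j : ℕ) else 0)
    (Q : Bool → Matrix (Fin (2 ^ (n + 1))) (Fin (2 ^ (n + 1))) ℂ)
    (hQ : ∀ c a b, Q c a b =
      if ∃ i : Fin (n + 1), c = α i ∧ a = z i ∧ b = z (i + 1)
      then (((R.card : ℝ) ^ (-(1 : ℝ) / (n + 1)) : ℝ) : ℂ) else 0) :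
    ∀ x : Fin (n + 1) → Bool,
      Matrix.trace ((List.ofFn fun i => Q (x i)).prod)
        = if x ∈ R then ((R.card : ℂ))⁻¹ else 0 := by
  intro x
  set r : ℂ := (((R.card : ℝ) ^ (-(1 : ℝ) / (n + 1)) : ℝ) : ℂ)
  have hQ_eq : Q = labelledEdgeMatrix (· + 1) α z r := by
    ext c a b
    rw [hQ]
    simp only [labelledEdgeMatrix, of_apply]
    congr 1
  have hz_iff (i j : Fin (n + 1)) : z i = z j ↔ (fun k => α (k + i)) = fun k => α (k + j) := by
    rw [← Fin.val_inj, hz, hz]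
    exact (sum_two_pow_ite_injective _).eq_iff
  have hcongr (i j : Fin (n + 1)) (hij : z i = z j) : α i = α j ∧ z (i + 1) = z (j + 1) := by
    have hrot := (hz_iff i j).1 hij
    refine ⟨by simpa using congrFun hrot 0, (hz_iff _ _).2 (funext fun k => ?_)⟩
    have hk := congrFun hrot (k + 1)
    rwa [add_assoc, add_assoc, add_comm 1 i, add_comm 1 j] at hk
  have hr : r ^ (n + 1) = (R.card : ℂ)⁻¹ := by
    have h := Real.rpow_neg_one_div_natCast_pow (Nat.cast_nonneg #R) n.succ_ne_zero
    push_cast at h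
    simp only [r, ← Complex.ofReal_pow, h, Complex.ofReal_inv, Complex.ofReal_natCast]
  rw [hQ_eq, trace_prod_ofFn_labelledEdgeMatrix r hcongr]
  simp only [Fin.forall_eq_apply_iterate_add_one_iff, Fin.iterate_add_one_self, and_true]
  rw [card_image_filter_eq_apply (fun i j => (hz_iff i j).2), ← hR, hr]
  split_ifs <;> simp
end

section
/- Let T_n be a transfer matrix on E_n = {0,1}^n with product form T_n(a,b) = ∏_{i=0}^{n-1} T_{a_i, a_{i⊕1}, b_i} for scalars T_{a,b,c}. Suppose there exist square matrices V^0, V^1, H^0, H^1 (all the same size) with V^x H^y = 0 for x ≠ y, and such that V^x H^x = Σ_{y,y' ∈ {0,1}} H^y V^{y'} T_{y,y',x} for each x ∈ {0,1}. Then the measure μ defined on E_n by μ(x) = Trace(∏_{i=0}^{n-1} V^{x_i} H^{x_i}) satisfies μ = μ T_n, i.e. for all b ∈ E_n, μ(b) = Σ_{a ∈ E_n} μ(a) T_n(a,b). -/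
open Matrix

/-!
Expanding each factor `V^{b_i} H^{b_i}` by the quadratic relation writes `μ(b)` as a sum over
pairs of configurations `y, y'` of `∏ T_{y_i, y'_i, b_i}` times `Tr ∏ H^{y_i} V^{y'_i}`.
Cyclicity of the trace regroups that product as `∏ V^{y'_i} H^{y_{i⊕1}}`, which vanishes unless
`y' = y(· ⊕ 1)`; on that diagonal it is a cyclic rotation of `∏ V^{y_i} H^{y_i}`, whose trace
is `μ(y)`, while the weight is `T_n(y, b)`.
-/

namespace List

theorem prod_ofFn_smul {R A : Type*} [CommSemiring R] [Semiring A] [Algebra R A] {k : ℕ}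
    (c : Fin k → R) (M : Fin k → A) :
    (ofFn fun i => c i • M i).prod = (∏ i, c i) • (ofFn M).prod := by
  induction k with
  | zero => simp
  | succ k ih =>
    rw [ofFn_succ, ofFn_succ (f := M), prod_cons, prod_cons, ih, Fin.prod_univ_succ,
      smul_mul_smul_comm]

theorem prod_ofFn_sum {A α : Type*} [Semiring A] [Fintype α] {k : ℕ} (f : Fin k → α → A) :
    (ofFn fun i => ∑ x, f i x).prod = ∑ g : Fin k → α, (ofFn fun i => f i (g i)).prod := by
  induction k with
  | zero => simp
  | succ k ih =>
    rw [ofFn_succ, prod_cons, ih, Finset.sum_mul_sum,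
      ← (Fin.consEquiv fun _ => α).sum_comp, Fintype.sum_prod_type]
    simp [Fin.consEquiv, ofFn_succ]

theorem prod_ofFn_mul_regroup {M : Type*} [Monoid M] {k : ℕ} (X Y : Fin (k + 1) → M) :
    (ofFn fun i => X i * Y i).prod
      = X 0 * (ofFn fun i : Fin k => Y i.castSucc * X i.succ).prod * Y (Fin.last k) := by
  induction k with
  | zero => simp
  | succ k ih =>
    rw [ofFn_succ' (f := fun i => X i * Y i), concat_eq_append, prod_append, prod_singleton,
      ih (fun i => X i.castSucc) (fun i => Y i.castSucc),
      ofFn_succ' (f := fun i : Fin (k + 1) => Y i.castSucc * X i.succ), concat_eq_append,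
      prod_append, prod_singleton]
    simp only [Fin.succ_castSucc, Fin.castSucc_zero, Fin.succ_last, mul_assoc]

end List

namespace Matrix

variable {ι R : Type*} [Fintype ι] [DecidableEq ι] [CommSemiring R] {k : ℕ}

theorem trace_prod_ofFn_comp_add_one (W : Fin (k + 1) → Matrix ι ι R) :
    trace (List.ofFn fun i => W (i + 1)).prod = trace (List.ofFn W).prod := by
  rw [List.ofFn_succ', List.ofFn_succ, List.concat_eq_append, List.prod_append,
    List.prod_singleton, List.prod_cons, trace_mul_comm]
  simp only [Fin.coeSucc_eq_succ, Fin.last_add_one]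

theorem trace_prod_ofFn_mul_comm_shift (X Y : Fin (k + 1) → Matrix ι ι R) :
    trace (List.ofFn fun i => X i * Y i).prod
      = trace (List.ofFn fun i => Y i * X (i + 1)).prod := by
  rw [List.prod_ofFn_mul_regroup, List.ofFn_succ', List.concat_eq_append, List.prod_append,
    List.prod_singleton, mul_assoc, trace_mul_comm, ← mul_assoc]
  simp only [Fin.coeSucc_eq_succ, Fin.last_add_one]

end Matrix

section QuadraticAlgebra

variable {S ι R : Type*} [Fintype ι] [DecidableEq ι] [CommSemiring R] {k : ℕ}
  {T : S → S → S → R} {V H : S → Matrix ι ι R}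

theorem trace_prod_VH_eq_sum [Fintype S]
    (hVH : ∀ x, V x * H x = ∑ y, ∑ y', T y y' x • (H y * V y')) (b : Fin k → S) :
    trace (List.ofFn fun i => V (b i) * H (b i)).prod
      = ∑ y : Fin k → S, ∑ y' : Fin k → S,
          (∏ i, T (y i) (y' i) (b i)) * trace (List.ofFn fun i => H (y i) * V (y' i)).prod := by
  simp_rw [hVH, ← Fintype.sum_prod_type', List.prod_ofFn_sum, trace_sum,
    List.prod_ofFn_smul, trace_smul, smul_eq_mul]
  exact Fintype.sum_equiv (Equiv.arrowProdEquivProdArrow _ _ _) _ _ fun _ => rfl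

theorem trace_prod_HV_eq_zero (hVH0 : ∀ x y, x ≠ y → V x * H y = 0)
    {y y' : Fin (k + 1) → S} (hy : y' ≠ fun i => y (i + 1)) :
    trace (List.ofFn fun i => H (y i) * V (y' i)).prod = 0 := by
  obtain ⟨i, hi⟩ := Function.ne_iff.mp hy
  rw [trace_prod_ofFn_mul_comm_shift,
    List.prod_eq_zero (List.mem_ofFn.mpr ⟨i, hVH0 _ _ hi⟩), trace_zero]

theorem trace_prod_HV_shift (y : Fin (k + 1) → S) :
    trace (List.ofFn fun i => H (y i) * V (y (i + 1))).prod
      = trace (List.ofFn fun i => V (y i) * H (y i)).prod := by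
  rw [trace_prod_ofFn_mul_comm_shift,
    trace_prod_ofFn_comp_add_one fun i => V (y i) * H (y i)]

end QuadraticAlgebra

/-- Lemma (fundamental, finite case): if `V^x H^y = 0` for `x ≠ y` and the
quadratic system `V^x H^x = Σ_{y,y'} T_{y,y',x} H^y V^{y'}` holds, then the
measure `μ(x) = Trace(∏ V^{x_i} H^{x_i})` satisfies `μ = μ T_n` for the
product-form transfer matrix `T_n`. -/
theorem invariance_of_trace_measure (n m : ℕ)
    (T : Bool → Bool → Bool → ℂ)
    (Tn : (Fin (n + 1) → Bool) → (Fin (n + 1) → Bool) → ℂ)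
    (hTn : ∀ a b, Tn a b = ∏ i, T (a i) (a (i + 1)) (b i))
    (V H : Bool → Matrix (Fin m) (Fin m) ℂ)
    (hVH0 : ∀ x y, x ≠ y → V x * H y = 0)
    (hVH : ∀ x, V x * H x = ∑ y : Bool, ∑ y' : Bool, T y y' x • (H y * V y'))
    (μ : (Fin (n + 1) → Bool) → ℂ)
    (hμ : ∀ x, μ x = Matrix.trace ((List.ofFn fun i => V (x i) * H (x i)).prod)) :
    ∀ b, μ b = ∑ a : Fin (n + 1) → Bool, μ a * Tn a b := by
  intro b
  rw [hμ, trace_prod_VH_eq_sum hVH]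
  refine Finset.sum_congr rfl fun y _ => ?_
  rw [Fintype.sum_eq_single (fun i => y (i + 1)) fun y' hy' => by
      rw [trace_prod_HV_eq_zero hVH0 hy', mul_zero],
    trace_prod_HV_shift, ← hμ, hTn, mul_comm]
end

section
/- Let T_n be a transfer matrix on E_n = {0,1}^n. Suppose Q^x_{(0)} = V^x_{(0)} H^x_{(0)} with V^x_{(0)} H^y_{(0)} = 0 for x ≠ y, and let μ_{(0)}(x) = Trace(∏_i Q^{x_i}_{(0)}). Suppose there exist matrices h_{xy}, v_{xy} (x,y ∈ {0,1}) of compatible sizes such that Trace(∏_{i=0}^{n-1} h_{y_i, x_{i⊕1}} v_{y_{i⊕1}, x_{i⊕1}}) = T_n(y, x) for all x,y ∈ E_n. Define V^x_{(1)} = Σ_y H^y_{(0)} ⊗ h_{y,x}, H^x_{(1)} = Σ_y V^y_{(0)} ⊗ v_{y,x}, Q^x_{(1)} = V^x_{(1)} H^x_{(1)}, and μ_{(1)}(x) = Trace(∏_i Q^{x_i}_{(1)}). Then μ_{(1)} = μ_{(0)} T_n. -/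
open Matrix Kronecker

/-!
Rotating the cyclic word by one letter gives `μ₁ x = Tr ∏ᵢ H¹(xᵢ) V¹(xᵢ₊₁)`. By the mixed-product
rule and the orthogonality `V⁰(y) H⁰(z) = 0` for `y ≠ z`, each factor collapses to
`∑_y Q⁰(y) ⊗ v(y, xᵢ) h(y, xᵢ₊₁)`. Expanding the product of sums and using
`Tr (A ⊗ B) = Tr A · Tr B` yields `∑_y μ₀ y · Tr ∏ᵢ v(yᵢ, xᵢ) h(yᵢ, xᵢ₊₁)`, and a second rotation
turns the last trace into `Tₙ(y, x)`.
-/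

theorem List.prod_ofFn_sum_s8 {R ι : Type*} [Semiring R] [Fintype ι] :
    ∀ {N : ℕ} (f : Fin N → ι → R),
      (List.ofFn fun i => ∑ j, f i j).prod = ∑ g : Fin N → ι, (List.ofFn fun i => f i (g i)).prod
  | 0, _ => by simp
  | N + 1, f => by
    simp only [List.ofFn_succ, List.prod_cons, List.prod_ofFn_sum_s8 fun i : Fin N => f i.succ,
      Finset.sum_mul_sum, ← (Fin.consEquiv fun _ => ι).sum_comp, Fintype.sum_prod_type]
    simp [Fin.consEquiv]

namespace Matrix

variable {R : Type*}

theorem list_prod_ofFn_kronecker [CommSemiring R] {m n : Type*} [Fintype m] [Fintype n]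
    [DecidableEq m] [DecidableEq n] :
    ∀ {N : ℕ} (P : Fin N → Matrix m m R) (S : Fin N → Matrix n n R),
      (List.ofFn fun i => P i ⊗ₖ S i).prod = (List.ofFn P).prod ⊗ₖ (List.ofFn S).prod
  | 0, _, _ => by simp
  | N + 1, P, S => by
    simp only [List.ofFn_succ, List.prod_cons,
      list_prod_ofFn_kronecker (fun i => P i.succ) (fun i => S i.succ), mul_kronecker_mul]

theorem trace_list_prod_ofFn_sum_kronecker [CommSemiring R] {ι m n : Type*} [Fintype ι]
    [Fintype m] [Fintype n] [DecidableEq m] [DecidableEq n] {N : ℕ}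
    (P : Fin N → ι → Matrix m m R) (S : Fin N → ι → Matrix n n R) :
    trace (List.ofFn fun i => ∑ j, P i j ⊗ₖ S i j).prod =
      ∑ g : Fin N → ι, trace (List.ofFn fun i => P i (g i)).prod *
        trace (List.ofFn fun i => S i (g i)).prod := by
  simp only [List.prod_ofFn_sum_s8, trace_sum, list_prod_ofFn_kronecker, trace_kronecker]

theorem list_prod_ofFn_mul_eq_mul_mul [Semiring R] {m n : Type*} [Fintype m] [Fintype n]
    [DecidableEq m] [DecidableEq n] :
    ∀ {N : ℕ} (A : Fin (N + 1) → Matrix m n R) (B : Fin (N + 1) → Matrix n m R),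
      (List.ofFn fun i => A i * B i).prod =
        A 0 * (List.ofFn fun i : Fin N => B i.castSucc * A i.succ).prod * B (Fin.last N)
  | 0, _, _ => by simp
  | N + 1, A, B => by
    rw [List.ofFn_succ, List.prod_cons,
      list_prod_ofFn_mul_eq_mul_mul (fun i => A i.succ) (fun i => B i.succ),
      List.ofFn_succ (n := N), List.prod_cons]
    simp only [Matrix.mul_assoc, Fin.succ_castSucc, Fin.succ_last, Fin.castSucc_zero,
      Fin.succ_zero_eq_one]

theorem trace_list_prod_ofFn_mul_rotate [CommSemiring R] {m n : Type*} [Fintype m] [Fintype n]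
    [DecidableEq m] [DecidableEq n] {N : ℕ}
    (A : Fin (N + 1) → Matrix m n R) (B : Fin (N + 1) → Matrix n m R) :
    trace (List.ofFn fun i => A i * B i).prod = trace (List.ofFn fun i => B i * A (i + 1)).prod := by
  rw [list_prod_ofFn_mul_eq_mul_mul, trace_mul_comm, ← Matrix.mul_assoc, trace_mul_comm,
    List.ofFn_succ', List.prod_concat]
  simp [Fin.coeSucc_eq_succ]

theorem sum_kronecker_mul_sum_kronecker_of_orthogonal [CommSemiring R] {ι l m n k q p : Type*}
    [Fintype ι] [DecidableEq ι] [Fintype m] [Fintype q] (V : ι → Matrix l m R)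
    (H : ι → Matrix m n R) (v : ι → Matrix k q R) (h : ι → Matrix q p R)
    (hVH : ∀ y z, y ≠ z → V y * H z = 0) :
    (∑ y, V y ⊗ₖ v y) * (∑ z, H z ⊗ₖ h z) = ∑ y, (V y * H y) ⊗ₖ (v y * h y) := by
  rw [Matrix.sum_mul]
  refine Finset.sum_congr rfl fun y _ => ?_
  rw [Matrix.mul_sum, Fintype.sum_eq_single y fun z hz => by
    rw [← mul_kronecker_mul, hVH y z (Ne.symm hz), zero_kronecker], mul_kronecker_mul]

end Matrix

/-- Second fundamental lemma, part 1: one-step evolution of the trace measure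
under a transfer matrix admitting a trace factorization by matrices
`h_{x,y}, v_{x,y}`, via the Kronecker-product rewriting of `V` and `H`. -/
theorem one_step_evolution_of_trace_measure (n m l d e : ℕ)
    (Tn : (Fin (n + 1) → Bool) → (Fin (n + 1) → Bool) → ℂ)
    (V0 : Bool → Matrix (Fin m) (Fin l) ℂ)
    (H0 : Bool → Matrix (Fin l) (Fin m) ℂ)
    (hVH0 : ∀ x y, x ≠ y → V0 x * H0 y = 0)
    (h : Bool → Bool → Matrix (Fin d) (Fin e) ℂ)
    (v : Bool → Bool → Matrix (Fin e) (Fin d) ℂ)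
    (hT : ∀ y x : Fin (n + 1) → Bool,
      Matrix.trace ((List.ofFn fun i =>
        h (y i) (x (i + 1)) * v (y (i + 1)) (x (i + 1))).prod) = Tn y x)
    (V1 : Bool → Matrix (Fin l × Fin d) (Fin m × Fin e) ℂ)
    (H1 : Bool → Matrix (Fin m × Fin e) (Fin l × Fin d) ℂ)
    (hV1 : ∀ x, V1 x = ∑ y : Bool, H0 y ⊗ₖ h y x)
    (hH1 : ∀ x, H1 x = ∑ y : Bool, V0 y ⊗ₖ v y x)
    (μ0 μ1 : (Fin (n + 1) → Bool) → ℂ)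
    (hμ0 : ∀ x, μ0 x = Matrix.trace ((List.ofFn fun i => V0 (x i) * H0 (x i)).prod))
    (hμ1 : ∀ x, μ1 x = Matrix.trace ((List.ofFn fun i => V1 (x i) * H1 (x i)).prod)) :
    ∀ x, μ1 x = ∑ y : Fin (n + 1) → Bool, μ0 y * Tn y x := by
  intro x
  have hHV : ∀ a b, H1 a * V1 b = ∑ y, (V0 y * H0 y) ⊗ₖ (v y a * h y b) := fun a b => by
    rw [hH1, hV1, sum_kronecker_mul_sum_kronecker_of_orthogonal _ _ _ _ hVH0]
  calc μ1 x = trace (List.ofFn fun i => H1 (x i) * V1 (x (i + 1))).prod := by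
        rw [hμ1, trace_list_prod_ofFn_mul_rotate]
    _ = ∑ y : Fin (n + 1) → Bool, trace (List.ofFn fun i => V0 (y i) * H0 (y i)).prod *
          trace (List.ofFn fun i => v (y i) (x i) * h (y i) (x (i + 1))).prod := by
        simp only [hHV, trace_list_prod_ofFn_sum_kronecker]
    _ = ∑ y : Fin (n + 1) → Bool, μ0 y * Tn y x := by
        refine Finset.sum_congr rfl fun y _ => ?_
        rw [hμ0, ← hT, trace_list_prod_ofFn_mul_rotate (fun i => v (y i) (x i))]
end

section
/- Consider the quadratic system over ℂ with parameters p,q: c₁² + c₂² = q − pq; c₁² + q d₁² − q c₁² = 1; d₁² + d₂² = p − pq + q; d₁c₁ + d₂c₂ = q − pq; a₁² + a₂² = 1 − q + pq; b₁a₁ + b₂a₂ = 1 − q + pq; b₁² + b₂² = 1 − q − p + pq. This system has a complex solution (a₁,a₂,b₁,b₂,c₁,c₂,d₁,d₂) for generic values of p, q. -/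
/-!
The equations split into a block in `(a, b)` and a block in `(c, d)`, viewed as vectors of `ℂ²`
with the bilinear form `u ⬝ v = u₁ v₁ + u₂ v₂`. The first block only prescribes the Gram matrix
`[[s, s], [s, t]]`, which is realised by `a = (√s, 0)`, `b = (√s, √(t - s))`.
In the second block put `e = d - c`: the equations become `c ⬝ c = q (1 - p)`, `e ⬝ e = p`,
`c ⬝ e = 0` and `(1 - q) c₁² + q d₁² = 1`. The first three hold for `c = √(q (1 - p)) (x, y)` and
`e = √p (-y, x)` whenever `x² + y² = 1`, and the last one becomes a quadratic equation
`A x² + B x y + C y² = 1` on the unit conic, solvable unless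
`(A - C)² + B² = q² (1 - 4 p (1 - p) (1 - q))` vanishes.
-/

open MvPolynomial

section

variable {K : Type*} [Field K] [IsAlgClosed K]

theorem IsAlgClosed.exists_quadratic_eq_zero {a : K} (ha : a ≠ 0) (b c : K) :
    ∃ x, a * x ^ 2 + b * x + c = 0 := by
  obtain ⟨x, hx⟩ := IsAlgClosed.exists_root (.C a * .X ^ 2 + .C b * .X + .C c)
    (by rw [Polynomial.degree_quadratic ha]; decide)
  exact ⟨x, by simpa using hx⟩

/-- `(A - C)² + B²` is the resultant of `Q - (x² + y²)` and `x² + y²`, where `Q = A x² + B x y + C y²`: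
it vanishes when every zero line of `Q - (x² + y²)` is isotropic, i.e. misses the unit conic. -/
theorem exists_sq_add_sq_eq_one_and_quadForm_eq_one {A B C : K}
    (h : (A - C) ^ 2 + B ^ 2 ≠ 0) :
    ∃ x y : K, x ^ 2 + y ^ 2 = 1 ∧ A * x ^ 2 + B * x * y + C * y ^ 2 = 1 := by
  by_cases hA : A = 1
  · exact ⟨1, 0, by ring, by rw [hA]; ring⟩
  obtain ⟨t, ht⟩ := IsAlgClosed.exists_quadratic_eq_zero (sub_ne_zero.mpr hA) B (C - 1)
  have hnorm : t ^ 2 + 1 ≠ 0 := fun h0 ↦ h <| by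
    linear_combination (C - A - B * t) * (ht - (A - 1) * h0) + B ^ 2 * h0
  obtain ⟨s, hs⟩ := IsAlgClosed.exists_pow_nat_eq (t ^ 2 + 1) two_pos
  have hs0 : s ≠ 0 := by rintro rfl; exact hnorm (by rw [← hs]; ring)
  refine ⟨t / s, 1 / s, ?_, ?_⟩
  · field_simp
    linear_combination -hs
  · field_simp
    linear_combination ht - hs

theorem exists_vectors_of_gram (s t : K) :
    ∃ a₁ a₂ b₁ b₂ : K, a₁ ^ 2 + a₂ ^ 2 = s ∧ b₁ * a₁ + b₂ * a₂ = s ∧ b₁ ^ 2 + b₂ ^ 2 = t := by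
  obtain ⟨a, ha⟩ := IsAlgClosed.exists_pow_nat_eq s two_pos
  obtain ⟨b, hb⟩ := IsAlgClosed.exists_pow_nat_eq (t - s) two_pos
  exact ⟨a, 0, a, b, by linear_combination ha, by linear_combination ha,
    by linear_combination ha + hb⟩

theorem sys2Y_cd_block_solvable {p q : K} (h : q ^ 2 * (1 - 4 * p * (1 - p) * (1 - q)) ≠ 0) :
    ∃ c₁ c₂ d₁ d₂ : K,
      c₁ ^ 2 + c₂ ^ 2 = q - p * q ∧
      c₁ ^ 2 + q * d₁ ^ 2 - q * c₁ ^ 2 = 1 ∧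
      d₁ ^ 2 + d₂ ^ 2 = p - p * q + q ∧
      d₁ * c₁ + d₂ * c₂ = q - p * q := by
  obtain ⟨r, hr⟩ := IsAlgClosed.exists_pow_nat_eq (q * (1 - p)) two_pos
  obtain ⟨s, hs⟩ := IsAlgClosed.exists_pow_nat_eq p two_pos
  obtain ⟨x, y, hxy, hQ⟩ :=
    exists_sq_add_sq_eq_one_and_quadForm_eq_one (A := q * (1 - p)) (B := -2 * q * r * s)
      (C := q * p) fun h0 ↦ h <| by
        linear_combination h0 - 4 * q ^ 2 * (s ^ 2 * hr + q * (1 - p) * hs)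
  refine ⟨r * x, r * y, r * x - s * y, r * y + s * x, ?_, ?_, ?_, ?_⟩
  · linear_combination r ^ 2 * hxy + hr
  · linear_combination hQ + x ^ 2 * hr + q * y ^ 2 * hs
  · linear_combination (r ^ 2 + s ^ 2) * hxy + hr + hs
  · linear_combination r ^ 2 * hxy + hr

end

/-- The quadratic system `Sys₂^Y` arising from the gas of type 2 has a complex
solution for generic parameters `(p,q)`: there is a nonzero polynomial `g` in
`p, q` such that whenever `g(p,q) ≠ 0` the system is solvable. -/
theorem sys2Y_has_solution_generically :
    ∃ g : MvPolynomial (Fin 2) ℂ, g ≠ 0 ∧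
      ∀ p q : ℂ, MvPolynomial.eval ![p, q] g ≠ 0 →
        ∃ a₁ a₂ b₁ b₂ c₁ c₂ d₁ d₂ : ℂ,
          c₁ ^ 2 + c₂ ^ 2 = q - p * q ∧
          c₁ ^ 2 + q * d₁ ^ 2 - q * c₁ ^ 2 = 1 ∧
          d₁ ^ 2 + d₂ ^ 2 = p - p * q + q ∧
          d₁ * c₁ + d₂ * c₂ = q - p * q ∧
          a₁ ^ 2 + a₂ ^ 2 = 1 - q + p * q ∧
          b₁ * a₁ + b₂ * a₂ = 1 - q + p * q ∧
          b₁ ^ 2 + b₂ ^ 2 = 1 - q - p + p * q := by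
  refine ⟨X 1 ^ 2 * (1 - 4 * X 0 * (1 - X 0) * (1 - X 1)), fun hg ↦ ?_, fun p q hg ↦ ?_⟩
  · simpa using congrArg (eval ![0, 1]) hg
  · obtain ⟨c₁, c₂, d₁, d₂, hcd⟩ := sys2Y_cd_block_solvable (p := p) (q := q) (by simpa using hg)
    obtain ⟨a₁, a₂, b₁, b₂, hab⟩ := exists_vectors_of_gram (1 - q + p * q) (1 - q - p + p * q)
    exact ⟨a₁, a₂, b₁, b₂, c₁, c₂, d₁, d₂, hcd.1, hcd.2.1, hcd.2.2.1, hcd.2.2.2, hab⟩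
end

section
/- Let T be an irreducible aperiodic stochastic matrix on a finite state space E. Then there is a unique probability measure μ on E with μ = μ T, and for every probability measure ν on E, ν T^κ converges to μ as κ → ∞. -/
open Matrix Filter

set_option linter.unusedVariables false
set_option linter.unusedSectionVars false
set_option linter.unusedTactic false

lemma aux_semigroup_cofinite (S : Set ℕ)
    (hpos : ∀ a ∈ S, 0 < a)
    (hadd : ∀ a ∈ S, ∀ b ∈ S, a + b ∈ S)
    (hne : S.Nonempty)
    (hgcd : ∀ d : ℕ, (∀ k ∈ S, d ∣ k) → d = 1) :
    ∃ N, ∀ n, N ≤ n → n ∈ S := by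
  have hmul : ∀ a ∈ S, ∀ k : ℕ, 0 < k → k * a ∈ S := by
    intro a ha k hk
    induction k with
    | zero => omega
    | succ k ih =>
      rcases Nat.eq_zero_or_pos k with rfl | hk'
      · simpa using ha
      · have := hadd (k * a) (ih hk') a ha
        simpa [Nat.succ_mul] using this
  set G : AddSubgroup ℤ := AddSubgroup.closure ((↑) '' S) with hGdef
  obtain ⟨a, hG⟩ := Int.subgroup_cyclic G
  have hmemG : ∀ k ∈ S, (k : ℤ) ∈ G := fun k hk =>
    AddSubgroup.subset_closure ⟨k, hk, rfl⟩
  have hdvd : ∀ k ∈ S, a.natAbs ∣ k := by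
    intro k hk
    have hkG := hmemG k hk
    rw [hG, AddSubgroup.mem_closure_singleton] at hkG
    obtain ⟨n, hn⟩ := hkG
    have : a ∣ (k : ℤ) := Dvd.intro_left n (by simpa [zsmul_eq_mul] using hn)
    simpa using Int.natAbs_dvd_natAbs.mpr this
  have ha1 : a.natAbs = 1 := hgcd _ hdvd
  have h1G : (1 : ℤ) ∈ G := by
    have haG : a ∈ G := by rw [hG]; exact AddSubgroup.subset_closure rfl
    rcases Int.natAbs_eq_iff.mp ha1 with h | h
    · simpa [h] using haG
    · simpa [h] using G.neg_mem haG
  have hrep : ∀ x ∈ G, ∃ u v : ℕ, (u ∈ S ∨ u = 0) ∧ (v ∈ S ∨ v = 0) ∧ x = (u : ℤ) - v := by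
    intro x hx
    refine AddSubgroup.closure_induction ?_ ?_ ?_ ?_ hx
    · rintro y ⟨k, hk, rfl⟩
      exact ⟨k, 0, Or.inl hk, Or.inr rfl, by simp⟩
    · exact ⟨0, 0, Or.inr rfl, Or.inr rfl, by simp⟩
    · rintro x y hx' hy' ⟨u₁, v₁, hu₁, hv₁, rfl⟩ ⟨u₂, v₂, hu₂, hv₂, rfl⟩
      refine ⟨u₁ + u₂, v₁ + v₂, ?_, ?_, by push_cast; ring⟩
      · rcases hu₁ with h | h <;> rcases hu₂ with h' | h'
        · exact Or.inl (hadd _ h _ h')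
        · exact Or.inl (by simpa [h'] using h)
        · exact Or.inl (by simpa [h] using h')
        · exact Or.inr (by simp [h, h'])
      · rcases hv₁ with h | h <;> rcases hv₂ with h' | h'
        · exact Or.inl (hadd _ h _ h')
        · exact Or.inl (by simpa [h'] using h)
        · exact Or.inl (by simpa [h] using h')
        · exact Or.inr (by simp [h, h'])
    · rintro x hx' ⟨u, v, hu, hv, rfl⟩
      exact ⟨v, u, hv, hu, by ring⟩
  obtain ⟨u, v, hu, hv, huv⟩ := hrep 1 h1G
  have huv' : u = v + 1 := by omega
  rcases hv with hvS | hv0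
  · -- v ∈ S, u = v + 1 ∈ S
    have hvpos : 0 < v := hpos v hvS
    have huS : u ∈ S := by rcases hu with h | h; exact h; omega
    set s := v
    refine ⟨s * s, fun n hn => ?_⟩
    set q := n / s with hq
    set r := n % s with hr
    have hrs : r < s := Nat.mod_lt _ hvpos
    have hsq : s ≤ q := (Nat.le_div_iff_mul_le hvpos).mpr hn
    have hrq : r ≤ q := le_of_lt (lt_of_lt_of_le hrs hsq)
    have key : s * q + r = n := Nat.div_add_mod n s
    have hco : n = (q - r) * s + r * (s + 1) := by
      zify [hrq]
      push_cast
      have key' : (s : ℤ) * q + r = n := by exact_mod_cast key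
      linear_combination -key'
    have h1 : (q - r) * s ∈ S := hmul s hvS (q - r) (by omega)
    rcases Nat.eq_zero_or_pos r with hr0 | hrpos
    · rw [hco, hr0]; simpa [hr0] using h1
    · have h2 : r * (s + 1) ∈ S := hmul (s + 1) (huv' ▸ huS) r hrpos
      rw [hco]; exact hadd _ h1 _ h2
  · -- v = 0, so 1 ∈ S
    have h1S : (1 : ℕ) ∈ S := by
      rcases hu with h | h
      · rwa [huv', hv0] at h
      · omega
    exact ⟨1, fun n hn => by simpa using hmul 1 h1S n hn⟩

section
variable {E : Type*} [Fintype E] [DecidableEq E] [Nonempty E]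

lemma aux_pow_nonneg (T : Matrix E E ℝ) (hnn : ∀ i j, 0 ≤ T i j) :
    ∀ k i j, 0 ≤ (T ^ k) i j := by
  intro k
  induction k with
  | zero =>
    intro i j
    by_cases h : i = j <;> simp [pow_zero, one_apply, h]
  | succ k ih =>
    intro i j
    rw [pow_succ, mul_apply]
    exact Finset.sum_nonneg fun l _ => mul_nonneg (ih i l) (hnn l j)

lemma aux_pow_row (T : Matrix E E ℝ) (hrow : ∀ i, ∑ j, T i j = 1) :
    ∀ k i, ∑ j, (T ^ k) i j = 1 := by
  intro k
  induction k with
  | zero => intro i; simp [pow_zero, one_apply]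
  | succ k ih =>
    intro i
    simp only [pow_succ, mul_apply]
    rw [Finset.sum_comm]
    simp_rw [← Finset.mul_sum, hrow, mul_one]
    exact ih i

lemma aux_pow_entry_ge (T : Matrix E E ℝ) (hnn : ∀ i j, 0 ≤ T i j)
    (a b : ℕ) (i k j : E) :
    (T ^ a) i k * (T ^ b) k j ≤ (T ^ (a + b)) i j := by
  rw [pow_add, mul_apply]
  exact Finset.single_le_sum
    (f := fun l => (T ^ a) i l * (T ^ b) l j)
    (fun l _ => mul_nonneg (aux_pow_nonneg T hnn a i l) (aux_pow_nonneg T hnn b l j))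
    (Finset.mem_univ k)

lemma aux_primitive (T : Matrix E E ℝ) (hnn : ∀ i j, 0 ≤ T i j)
    (hirr : ∀ i j, ∃ k, 0 < k ∧ 0 < (T ^ k) i j)
    (haper : ∀ i, ∀ d : ℕ, (∀ k, 0 < k → 0 < (T ^ k) i i → d ∣ k) → d = 1) :
    ∃ N, 0 < N ∧ ∀ i j, 0 < (T ^ N) i j := by
  classical
  have hS : ∀ i : E, ∃ Ni, ∀ n, Ni ≤ n → 0 < n ∧ 0 < (T ^ n) i i := by
    intro i
    have := aux_semigroup_cofinite {k | 0 < k ∧ 0 < (T ^ k) i i}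
      (fun a ha => ha.1)
      (fun a ha b hb => ⟨Nat.add_pos_left ha.1 b,
        lt_of_lt_of_le (mul_pos ha.2 hb.2) (aux_pow_entry_ge T hnn a b i i i)⟩)
      (by obtain ⟨k, hk1, hk2⟩ := hirr i i; exact ⟨k, hk1, hk2⟩)
      (fun d hd => haper i d fun k hk1 hk2 => hd k ⟨hk1, hk2⟩)
    obtain ⟨Ni, hNi⟩ := this
    exact ⟨Ni, fun n hn => hNi n hn⟩
  choose f hf using hS
  choose g hg1 hg2 using hirr
  set F := Finset.univ.sup f with hF
  set K := Finset.univ.sup (fun p : E × E => g p.1 p.2) with hK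
  refine ⟨F + K + 1, by omega, fun i j => ?_⟩
  have hgK : g i j ≤ K := Finset.le_sup (f := fun p : E × E => g p.1 p.2)
    (Finset.mem_univ (i, j))
  have hfF : f i ≤ F := Finset.le_sup (Finset.mem_univ i)
  set m := F + K + 1 - g i j with hm
  have hmfi : f i ≤ m := by omega
  have hdiag := (hf i m hmfi).2
  have heq : m + g i j = F + K + 1 := by omega
  calc (0:ℝ) < (T ^ m) i i * (T ^ (g i j)) i j := mul_pos hdiag (hg2 i j)
    _ ≤ (T ^ (m + g i j)) i j := aux_pow_entry_ge T hnn m (g i j) i i j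
    _ = (T ^ (F + K + 1)) i j := by rw [heq]

lemma aux_contract (A : Matrix E E ℝ) (hnn : ∀ i j, 0 ≤ A i j)
    (hrow : ∀ i, ∑ j, A i j = 1)
    (δ : ℝ) (hδle : ∀ i j, δ ≤ A i j)
    (f : E → ℝ) (hf : ∑ i, f i = 0) :
    ∑ j, |∑ i, f i * A i j| ≤ (1 - (Fintype.card E : ℝ) * δ) * ∑ i, |f i| := by
  have h1 : ∀ j, |∑ i, f i * A i j| ≤ ∑ i, |f i| * (A i j - δ) := by
    intro j
    have e : ∑ i, f i * A i j = ∑ i, f i * (A i j - δ) := by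
      simp only [mul_sub, Finset.sum_sub_distrib, ← Finset.sum_mul, hf, zero_mul, sub_zero]
    rw [e]
    calc |∑ i, f i * (A i j - δ)| ≤ ∑ i, |f i * (A i j - δ)| :=
          Finset.abs_sum_le_sum_abs _ _
      _ = ∑ i, |f i| * (A i j - δ) := by
          refine Finset.sum_congr rfl fun i _ => ?_
          rw [abs_mul, abs_of_nonneg (show (0:ℝ) ≤ A i j - δ by linarith [hδle i j])]
  calc ∑ j, |∑ i, f i * A i j| ≤ ∑ j, ∑ i, |f i| * (A i j - δ) :=
        Finset.sum_le_sum fun j _ => h1 j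
    _ = ∑ i, |f i| * (1 - (Fintype.card E : ℝ) * δ) := by
        rw [Finset.sum_comm]
        refine Finset.sum_congr rfl fun i _ => ?_
        rw [← Finset.mul_sum, Finset.sum_sub_distrib, hrow i, Finset.sum_const,
          Finset.card_univ, nsmul_eq_mul]
    _ = (1 - (Fintype.card E : ℝ) * δ) * ∑ i, |f i| := by
        rw [Finset.mul_sum]
        exact Finset.sum_congr rfl fun i _ => mul_comm _ _

end

/-- An irreducible aperiodic stochastic matrix on a finite state space has a
unique invariant probability measure, and the distribution at time `κ`
converges to it from any initial probability measure. -/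
theorem markov_chain_convergence {E : Type*} [Fintype E] [DecidableEq E] [Nonempty E]
    (T : Matrix E E ℝ)
    (hnn : ∀ i j, 0 ≤ T i j)
    (hrow : ∀ i, ∑ j, T i j = 1)
    (hirr : ∀ i j, ∃ k, 0 < k ∧ 0 < (T ^ k) i j)
    (haper : ∀ i, ∀ d : ℕ, (∀ k, 0 < k → 0 < (T ^ k) i i → d ∣ k) → d = 1) :
    ∃ μ : E → ℝ,
      (∀ i, 0 ≤ μ i) ∧ (∑ i, μ i = 1) ∧ (∀ j, μ j = ∑ i, μ i * T i j) ∧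
      (∀ μ' : E → ℝ, (∀ i, 0 ≤ μ' i) → (∑ i, μ' i = 1) →
        (∀ j, μ' j = ∑ i, μ' i * T i j) → μ' = μ) ∧
      (∀ ν : E → ℝ, (∀ i, 0 ≤ ν i) → (∑ i, ν i = 1) →
        ∀ j, Tendsto (fun κ : ℕ => ∑ i, ν i * (T ^ κ) i j) atTop (nhds (μ j))) := by
  classical
  -- basic bridge between `vecMul` and explicit sums
  have hvm : ∀ (v : E → ℝ) (M : Matrix E E ℝ) (j : E),
      (v ᵥ* M) j = ∑ i, v i * M i j := by
    intro v M j
    simp [vecMul, dotProduct]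
  obtain ⟨N, hNpos, hNentry⟩ := aux_primitive T hnn hirr haper
  set A := T ^ N with hA
  have hAnn : ∀ i j, 0 ≤ A i j := fun i j => aux_pow_nonneg T hnn N i j
  have hArow : ∀ i, ∑ j, A i j = 1 := fun i => aux_pow_row T hrow N i
  set δ := Finset.univ.inf' (Finset.univ_nonempty (α := E × E))
      (fun p : E × E => A p.1 p.2) with hδ
  have hδpos : 0 < δ := by
    rw [hδ, Finset.lt_inf'_iff]
    exact fun p _ => hNentry p.1 p.2
  have hδle : ∀ i j, δ ≤ A i j := fun i j =>
    Finset.inf'_le _ (Finset.mem_univ (i, j))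
  set c := 1 - (Fintype.card E : ℝ) * δ with hc
  have hcard : (1 : ℝ) ≤ (Fintype.card E : ℝ) := by
    exact_mod_cast Fintype.card_pos
  have hc1 : c < 1 := by
    have : 0 < (Fintype.card E : ℝ) * δ := mul_pos (by linarith) hδpos
    rw [hc]; linarith
  have hc0 : 0 ≤ c := by
    set i₀ := Classical.arbitrary E
    have h1 : (Fintype.card E : ℝ) * δ ≤ 1 := by
      calc (Fintype.card E : ℝ) * δ = ∑ _j : E, δ := by
            rw [Finset.sum_const, Finset.card_univ, nsmul_eq_mul]
        _ ≤ ∑ j, A i₀ j := Finset.sum_le_sum fun j _ => hδle i₀ j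
        _ = 1 := hArow i₀
    rw [hc]; linarith
  -- sum preservation under right multiplication by a row-stochastic matrix
  have sum_pres : ∀ (M : Matrix E E ℝ), (∀ i, ∑ j, M i j = 1) →
      ∀ f : E → ℝ, ∑ j, (f ᵥ* M) j = ∑ i, f i := by
    intro M hM f
    simp_rw [hvm]
    rw [Finset.sum_comm]
    simp_rw [← Finset.mul_sum, hM, mul_one]
  -- iterated contraction
  have iter : ∀ f : E → ℝ, ∑ i, f i = 0 → ∀ m : ℕ,
      ∑ j, |(f ᵥ* A ^ m) j| ≤ c ^ m * ∑ i, |f i| := by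
    intro f hf m
    induction m with
    | zero =>
      simp only [pow_zero, vecMul_one, one_mul]
      exact le_refl _
    | succ m ih =>
      have hsum : ∑ j, (f ᵥ* A ^ m) j = 0 := by
        rw [sum_pres (A ^ m) (aux_pow_row A hArow m) f, hf]
      have hstep : f ᵥ* A ^ (m + 1) = (f ᵥ* A ^ m) ᵥ* A := by
        rw [pow_succ, ← vecMul_vecMul]
      calc ∑ j, |(f ᵥ* A ^ (m + 1)) j| = ∑ j, |∑ i, (f ᵥ* A ^ m) i * A i j| := by
            simp_rw [hstep, hvm]
        _ ≤ c * ∑ i, |(f ᵥ* A ^ m) i| :=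
            aux_contract A hAnn hArow δ hδle (f ᵥ* A ^ m) hsum
        _ ≤ c * (c ^ m * ∑ i, |f i|) := by
            exact mul_le_mul_of_nonneg_left ih hc0
        _ = c ^ (m + 1) * ∑ i, |f i| := by ring
  -- the Cauchy sequence of distributions
  set ν₀ : E → ℝ := fun _ => (Fintype.card E : ℝ)⁻¹ with hν₀
  have hν₀nn : ∀ i, 0 ≤ ν₀ i := fun i => by positivity
  have hν₀sum : ∑ i, ν₀ i = 1 := by
    rw [hν₀, Finset.sum_const, Finset.card_univ, nsmul_eq_mul]
    field_simp
  set x : ℕ → E → ℝ := fun m => ν₀ ᵥ* A ^ m with hx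
  set f₀ : E → ℝ := fun i => x 1 i - x 0 i with hf₀
  have hf₀sum : ∑ i, f₀ i = 0 := by
    rw [hf₀]
    simp only [Finset.sum_sub_distrib]
    rw [hx]
    simp only []
    rw [sum_pres (A ^ 1) (aux_pow_row A hArow 1) ν₀,
      sum_pres (A ^ 0) (aux_pow_row A hArow 0) ν₀]
    ring
  have hxdiff : ∀ m, ∀ j, x (m + 1) j - x m j = (f₀ ᵥ* A ^ m) j := by
    intro m j
    have h1 : x (m + 1) = (x 1) ᵥ* A ^ m := by
      rw [hx]; simp only []
      rw [vecMul_vecMul, pow_one, ← pow_succ']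
    have h0 : x m = (x 0) ᵥ* A ^ m := by
      rw [hx]; simp only [pow_zero, vecMul_one]
    rw [h1, h0, hf₀]
    have : (fun i => x 1 i - x 0 i) = x 1 - x 0 := rfl
    rw [this, sub_vecMul]
    simp
  set C := ∑ i, |f₀ i| with hC
  have hCnn : 0 ≤ C := Finset.sum_nonneg fun i _ => abs_nonneg _
  have hdist : ∀ m, dist (x m) (x (m + 1)) ≤ C * c ^ m := by
    intro m
    rw [dist_pi_le_iff (by positivity)]
    intro j
    rw [Real.dist_eq]
    calc |x m j - x (m + 1) j| = |(f₀ ᵥ* A ^ m) j| := by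
          rw [abs_sub_comm, hxdiff m j]
      _ ≤ ∑ j', |(f₀ ᵥ* A ^ m) j'| :=
          Finset.single_le_sum (f := fun j' => |(f₀ ᵥ* A ^ m) j'|)
            (fun j' _ => abs_nonneg _) (Finset.mem_univ j)
      _ ≤ c ^ m * C := iter f₀ hf₀sum m
      _ = C * c ^ m := mul_comm _ _
  have hcauchy : CauchySeq x := cauchySeq_of_le_geometric c C hc1 hdist
  obtain ⟨μ, hμ⟩ := cauchySeq_tendsto_of_complete hcauchy
  have hcoord : ∀ j, Tendsto (fun m => x m j) atTop (nhds (μ j)) :=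
    fun j => tendsto_pi_nhds.mp hμ j
  -- coordinates of x are nonnegative
  have hxnn : ∀ m j, 0 ≤ x m j := by
    intro m j
    rw [hx]; simp only []
    rw [hvm]
    exact Finset.sum_nonneg fun i _ =>
      mul_nonneg (hν₀nn i) (aux_pow_nonneg A hAnn m i j)
  have hμnn : ∀ j, 0 ≤ μ j := fun j => ge_of_tendsto' (hcoord j) (fun m => hxnn m j)
  -- sum of μ is 1
  have hxsum : ∀ m, ∑ j, x m j = 1 := by
    intro m
    rw [hx]; simp only []
    rw [sum_pres (A ^ m) (aux_pow_row A hArow m) ν₀, hν₀sum]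
  have hμsum : ∑ j, μ j = 1 := by
    have h1 : Tendsto (fun m => ∑ j, x m j) atTop (nhds (∑ j, μ j)) :=
      tendsto_finset_sum _ fun j _ => hcoord j
    have h2 : Tendsto (fun m => ∑ j, x m j) atTop (nhds 1) := by
      simp_rw [hxsum]; exact tendsto_const_nhds
    exact tendsto_nhds_unique h1 h2
  -- μ is invariant under A
  have hfixA : μ ᵥ* A = μ := by
    funext j
    have hcont : Continuous (fun v : E → ℝ => ∑ i, v i * A i j) := by
      exact continuous_finset_sum _ fun i _ =>
        (continuous_apply i).mul continuous_const
    have h1 : Tendsto (fun m => x (m + 1) j) atTop (nhds ((μ ᵥ* A) j)) := by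
      have e : ∀ m, x (m + 1) j = ∑ i, x m i * A i j := by
        intro m
        rw [hx]; simp only []
        rw [pow_succ, ← vecMul_vecMul, hvm]
      simp_rw [e]
      rw [hvm]
      exact (hcont.tendsto μ).comp hμ
    have h2 : Tendsto (fun m => x (m + 1) j) atTop (nhds (μ j)) :=
      (hcoord j).comp (tendsto_add_atTop_nat 1)
    exact tendsto_nhds_unique h1 h2
  have hfixApow : ∀ q : ℕ, μ ᵥ* A ^ q = μ := by
    intro q
    induction q with
    | zero => simp [pow_zero, vecMul_one]
    | succ q ih => rw [pow_succ, ← vecMul_vecMul, ih, hfixA]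
  -- any sum-zero vector fixed by A is zero
  have hzero : ∀ g : E → ℝ, ∑ i, g i = 0 → g ᵥ* A = g → g = 0 := by
    intro g hgsum hgfix
    have h1 := iter g hgsum 1
    rw [pow_one, hgfix] at h1
    have h2 : (1 - c) * ∑ i, |g i| ≤ 0 := by
      rw [pow_one] at h1; nlinarith [Finset.sum_nonneg (fun i (_ : i ∈ Finset.univ) => abs_nonneg (g i))]
    have h3 : ∑ i, |g i| ≤ 0 := by nlinarith
    have h4 : ∑ i, |g i| = 0 :=
      le_antisymm h3 (Finset.sum_nonneg fun i _ => abs_nonneg _)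
    funext i
    have := (Finset.sum_eq_zero_iff_of_nonneg
      (fun i (_ : i ∈ Finset.univ) => abs_nonneg (g i))).mp h4 i (Finset.mem_univ i)
    simpa using abs_eq_zero.mp this
  -- μ is invariant under T
  have hcomm : T * A = A * T := (Commute.refl T).pow_right N
  have hfixT : μ ᵥ* T = μ := by
    have hg : (μ ᵥ* T - μ) ᵥ* A = μ ᵥ* T - μ := by
      have h1 : (μ ᵥ* T) ᵥ* A = μ ᵥ* T := by
        rw [vecMul_vecMul, hcomm, ← vecMul_vecMul, hfixA]
      rw [sub_vecMul, h1, hfixA]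
    have hgsum : ∑ i, (μ ᵥ* T - μ) i = 0 := by
      simp only [Pi.sub_apply, Finset.sum_sub_distrib]
      rw [sum_pres T hrow μ, hμsum]
      ring
    exact sub_eq_zero.mp (hzero _ hgsum hg)
  -- now assemble everything
  refine ⟨μ, hμnn, hμsum, ?_, ?_, ?_⟩
  · intro j
    rw [← hvm μ T j, hfixT]
  · -- uniqueness
    intro μ' hnn' hsum' hinv'
    have hfix' : μ' ᵥ* T = μ' := by
      funext j; rw [hvm]; exact (hinv' j).symm
    have hfixA' : μ' ᵥ* A = μ' := by
      rw [hA]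
      have : ∀ k : ℕ, μ' ᵥ* T ^ k = μ' := by
        intro k
        induction k with
        | zero => simp [pow_zero, vecMul_one]
        | succ k ih => rw [pow_succ, ← vecMul_vecMul, ih, hfix']
      exact this N
    have hgsum : ∑ i, (μ' - μ) i = 0 := by
      simp only [Pi.sub_apply, Finset.sum_sub_distrib, hsum', hμsum]
      ring
    have hgfix : (μ' - μ) ᵥ* A = μ' - μ := by
      rw [sub_vecMul, hfixA', hfixA]
    exact sub_eq_zero.mp (hzero _ hgsum hgfix)
  · -- convergence
    intro ν hνnn hνsum j
    have key : ∀ κ : ℕ, |(∑ i, ν i * (T ^ κ) i j) - μ j| ≤ 2 * c ^ (κ / N) := by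
      intro κ
      set q := κ / N with hq
      set r := κ % N with hr
      have hκ : T ^ κ = T ^ r * A ^ q := by
        rw [hA, ← pow_mul, ← pow_add]
        congr 1
        rw [hq, hr]
        exact (Nat.mod_add_div κ N).symm
      set w : E → ℝ := ν ᵥ* T ^ r with hw
      have hwnn : ∀ i, 0 ≤ w i := by
        intro i
        rw [hw, hvm]
        exact Finset.sum_nonneg fun l _ =>
          mul_nonneg (hνnn l) (aux_pow_nonneg T hnn r l i)
      have hwsum : ∑ i, w i = 1 := by
        rw [hw, sum_pres (T ^ r) (aux_pow_row T hrow r) ν, hνsum]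
      have hfsum : ∑ i, (w - μ) i = 0 := by
        simp only [Pi.sub_apply, Finset.sum_sub_distrib, hwsum, hμsum]
        ring
      have hfbound : ∑ i, |(w - μ) i| ≤ 2 := by
        calc ∑ i, |(w - μ) i| ≤ ∑ i, (w i + μ i) := by
              refine Finset.sum_le_sum fun i _ => ?_
              simp only [Pi.sub_apply]
              calc |w i - μ i| ≤ |w i| + |μ i| := abs_sub _ _
                _ = w i + μ i := by
                    rw [abs_of_nonneg (hwnn i), abs_of_nonneg (hμnn i)]
          _ = 2 := by rw [Finset.sum_add_distrib, hwsum, hμsum]; norm_num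
      have hfapp : (w - μ) ᵥ* A ^ q = (fun j' => (∑ i, ν i * (T ^ κ) i j') - μ j') := by
        funext j'
        rw [sub_vecMul, hfixApow q]
        simp only [Pi.sub_apply]
        congr 1
        rw [hw, vecMul_vecMul, ← hκ, hvm]
      calc |(∑ i, ν i * (T ^ κ) i j) - μ j|
          = |((w - μ) ᵥ* A ^ q) j| := by rw [hfapp]
        _ ≤ ∑ j', |((w - μ) ᵥ* A ^ q) j'| :=
            Finset.single_le_sum (f := fun j' => |((w - μ) ᵥ* A ^ q) j'|)
              (fun j' _ => abs_nonneg _) (Finset.mem_univ j)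
        _ ≤ c ^ q * ∑ i, |(w - μ) i| := iter (w - μ) hfsum q
        _ ≤ c ^ q * 2 := by
            exact mul_le_mul_of_nonneg_left hfbound (pow_nonneg hc0 q)
        _ = 2 * c ^ q := mul_comm _ _
    have hdiv : Tendsto (fun κ : ℕ => κ / N) atTop atTop := by
      refine tendsto_atTop_atTop.mpr fun b => ⟨b * N, fun κ hκ => ?_⟩
      exact (Nat.le_div_iff_mul_le hNpos).mpr hκ
    have hpow0 : Tendsto (fun κ : ℕ => 2 * c ^ (κ / N)) atTop (nhds 0) := by
      have h1 := (tendsto_pow_atTop_nhds_zero_of_lt_one hc0 hc1).comp hdiv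
      have h2 := h1.const_mul (2 : ℝ)
      simpa using h2
    rw [tendsto_iff_dist_tendsto_zero]
    refine squeeze_zero (fun κ => dist_nonneg) (fun κ => ?_) hpow0
    rw [Real.dist_eq]
    exact key κ
end
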